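/- arXiv:1011.0478 — 3 statements merged into one kernel-verified Lean document; each statement's English description precedes it below -/
import Mathlib

section
/- Let y(t) solve ẏ = f(y) with first integrals H₁,…,H_q, let P(v,u) be a projection with kernel span{∇̄H_j(v,u)} and with ‖I − P‖ bounded uniformly near the trajectory, and let φ_h be a method of order p: y(t+h) − φ_h(y(t)) = O(h^{p+1}). Then the projected step satisfies y(t+h) − y(t) − P(y(t), y(t+h))(φ_h(y(t)) − y(t)) = O(h^{p+1}); i.e., the projection scheme retains order p. -/
open Asymptotics Filter

/-! The increment `y(t+h) - y(t)` of the exact flow is orthogonal to every discrete gradient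
`∇̄H_j(y(t), y(t+h))`, because `⟨∇̄H_j, y(t+h) - y(t)⟩ = H_j(y(t+h)) - H_j(y(t)) = 0`. So the
projection `P` fixes it, and the local error of the projected step is `P` applied to the local
error of the method, which `P` (of norm at most one) does not enlarge. -/

theorem sub_mem_orthogonal_span_discreteGradient {E ι : Type*} [NormedAddCommGroup E]
    [InnerProductSpace ℝ E] (H : ι → E → ℝ) (g : ι → E) {u v : E}
    (hg : ∀ j, H j u - H j v = inner ℝ (g j) (u - v)) (hH : ∀ j, H j u = H j v) :
    u - v ∈ (Submodule.span ℝ (Set.range g))ᗮ := by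
  refine Submodule.isOrtho_span.mpr ?_ (Submodule.mem_span_singleton_self (u - v))
  rintro _ rfl _ ⟨j, rfl⟩
  rw [real_inner_comm, ← hg j, hH j, sub_self]

theorem Submodule.norm_sub_starProjection_le_of_mem {𝕜 E : Type*} [RCLike 𝕜]
    [NormedAddCommGroup E] [InnerProductSpace 𝕜 E] (K : Submodule 𝕜 E)
    [K.HasOrthogonalProjection] {x : E} (hx : x ∈ K) (z : E) :
    ‖x - K.starProjection z‖ ≤ ‖x - z‖ := by
  calc ‖x - K.starProjection z‖ = ‖K.starProjection (x - z)‖ := by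
        rw [map_sub, K.starProjection_eq_self_iff.mpr hx]
    _ ≤ ‖x - z‖ := K.norm_starProjection_apply_le _

theorem stmt_9_general {m q : ℕ} (p : ℕ) (H : Fin q → EuclideanSpace ℝ (Fin m) → ℝ)
    (dg : Fin q → EuclideanSpace ℝ (Fin m) → EuclideanSpace ℝ (Fin m) →
      EuclideanSpace ℝ (Fin m))
    (hdg : ∀ j, ∀ a b, H j b - H j a = inner ℝ (dg j a b) (b - a))
    (y : ℝ → EuclideanSpace ℝ (Fin m)) (t : ℝ)
    (hint : ∀ j, ∀ h : ℝ, H j (y (t + h)) = H j (y t))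
    (φ : ℝ → EuclideanSpace ℝ (Fin m) → EuclideanSpace ℝ (Fin m))
    (hφ : (fun h => y (t + h) - φ h (y t)) =O[nhds (0:ℝ)] fun h => h ^ (p + 1)) :
    (fun h => y (t + h) - y t -
        (Submodule.orthogonalProjectionOnto
          ((Submodule.span ℝ (Set.range fun j => dg j (y t) (y (t + h))))ᗮ)
          (φ h (y t) - y t) : EuclideanSpace ℝ (Fin m)))
      =O[nhds (0:ℝ)] fun h => h ^ (p + 1) := by
  refine (IsBigO.of_bound 1 (Eventually.of_forall fun h => ?_)).trans hφ
  have hincr := sub_mem_orthogonal_span_discreteGradient H (fun j => dg j (y t) (y (t + h)))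
    (fun j => hdg j _ _) (fun j => hint j h)
  rw [one_mul]
  exact (Submodule.norm_sub_starProjection_le_of_mem _ hincr (φ h (y t) - y t)).trans_eq
    (by rw [sub_sub_sub_cancel_right])

/-- Order of the projected scheme: projecting a method of order `p` onto the
discrete tangent space (via the orthogonal projection `P(v,u)` whose kernel is
the span of the discrete gradients) retains the order `p`. -/
theorem stmt_9 {m q : ℕ} (p : ℕ) (H : Fin q → EuclideanSpace ℝ (Fin m) → ℝ)
    (f : EuclideanSpace ℝ (Fin m) → EuclideanSpace ℝ (Fin m))
    (dg : Fin q → EuclideanSpace ℝ (Fin m) → EuclideanSpace ℝ (Fin m) →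
      EuclideanSpace ℝ (Fin m))
    (hdg : ∀ j, ∀ a b, H j b - H j a = inner ℝ (dg j a b) (b - a))
    (y : ℝ → EuclideanSpace ℝ (Fin m)) (t : ℝ)
    (hy : ∀ s, HasDerivAt y (f (y s)) s)
    (hint : ∀ j, ∀ h : ℝ, H j (y (t + h)) = H j (y t))
    (hcont : ∀ j, Continuous fun h : ℝ => dg j (y t) (y (t + h)))
    (hindep : LinearIndependent ℝ (fun j => dg j (y t) (y t)))
    (φ : ℝ → EuclideanSpace ℝ (Fin m) → EuclideanSpace ℝ (Fin m))
    (hφ : (fun h => y (t + h) - φ h (y t)) =O[nhds (0:ℝ)] fun h => h ^ (p + 1)) :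
    (fun h => y (t + h) - y t -
        (Submodule.orthogonalProjectionOnto
          ((Submodule.span ℝ (Set.range fun j => dg j (y t) (y (t + h))))ᗮ)
          (φ h (y t) - y t) : EuclideanSpace ℝ (Fin m)))
      =O[nhds (0:ℝ)] fun h => h ^ (p + 1) :=
  stmt_9_general p H dg hdg y t hint φ hφ
end

section
/- If the increment function ψ_h is symmetric (ψ_h(v,u) = ψ_h(u,v) in the sense appropriate for adjoint methods, i.e. ψ_{-h}(u,v) = ψ_h(v,u)) and each discrete gradient ∇̄H_j is symmetric (∇̄H_j(v,u) = ∇̄H_j(u,v)), then the projection method y^{n+1} = y^n + h P(y^n, y^{n+1}) ψ_h(y^n, y^{n+1}), with P(v,u) the orthogonal projection onto T_{(v,u)}M, is a symmetric (self-adjoint) one-step method: exchanging y^n ↔ y^{n+1} and h ↔ −h leaves the defining equation invariant. -/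
theorem eq_add_smul_iff_eq_add_neg_smul {R M : Type*} [Ring R] [AddCommGroup M] [Module R M]
    (h : R) (x y v : M) : y = x + h • v ↔ x = y + (-h) • v := by
  rw [neg_smul, ← sub_eq_add_neg, eq_sub_iff_add_eq, eq_comm]

/-- If the increment function `ψ` is symmetric (`ψ_{-h}(u,v) = ψ_h(v,u)`) and the
discrete gradients are symmetric, then the projected method
`y¹ = y⁰ + h P(y⁰,y¹) ψ_h(y⁰,y¹)`, with `P(v,u)` the orthogonal projection onto
the discrete tangent space, is symmetric: exchanging `y⁰ ↔ y¹`, `h ↔ -h` leaves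
the defining equation invariant. -/
theorem stmt_10 {m q : ℕ}
    (dg : Fin q → EuclideanSpace ℝ (Fin m) → EuclideanSpace ℝ (Fin m) →
      EuclideanSpace ℝ (Fin m))
    (hdgsym : ∀ j v u, dg j v u = dg j u v)
    (ψ : ℝ → EuclideanSpace ℝ (Fin m) → EuclideanSpace ℝ (Fin m) →
      EuclideanSpace ℝ (Fin m))
    (hψ : ∀ (h : ℝ) v u, ψ (-h) u v = ψ h v u) :
    ∀ (h : ℝ) (y₀ y₁ : EuclideanSpace ℝ (Fin m)),
      (y₁ = y₀ + h •
          (Submodule.orthogonalProjection ((Submodule.span ℝ (Set.range fun j => dg j y₀ y₁))ᗮ)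
            (ψ h y₀ y₁) : EuclideanSpace ℝ (Fin m)))
        ↔
      (y₀ = y₁ + (-h) •
          (Submodule.orthogonalProjection ((Submodule.span ℝ (Set.range fun j => dg j y₁ y₀))ᗮ)
            (ψ (-h) y₁ y₀) : EuclideanSpace ℝ (Fin m))) := by
  intro h y₀ y₁
  have hP : (fun j => dg j y₁ y₀) = fun j => dg j y₀ y₁ := funext fun j => hdgsym j y₁ y₀
  rw [hψ, hP]
  exact eq_add_smul_iff_eq_add_neg_smul h y₀ y₁ _
end

section
/- Under the assumptions that ∇H₁(y⁰),…,∇H_q(y⁰) are linearly independent for every y⁰ ∈ M and the discrete gradients ∇̄H_j(y⁰,·) are C^∞ in the second argument with ∇̄H_j(y⁰,y⁰) = ∇H_j(y⁰), the implicit relation y − y⁰ = T(y⁰,y)η, where the columns of T(y⁰,y) form a smooth orthonormal basis of the orthogonal complement of span{∇̄H_j(y⁰,y)}, defines a C^∞ local chart ω_{y⁰} : N_{y⁰} → ℝ^{m−q} of the level-set manifold M near y⁰, with C^∞ inverse. -/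
open scoped RealInnerProductSpace
open Submodule Module

section Helpers

variable {E : Type*} [NormedAddCommGroup E] [InnerProductSpace ℝ E]

lemma mem_orth_of_forall {s : Set E} {v : E} (h : ∀ u ∈ s, ⟪u, v⟫ = 0) :
    v ∈ (Submodule.span ℝ s)ᗮ := by
  rw [Submodule.mem_orthogonal]
  intro u hu
  induction hu using Submodule.span_induction with
  | mem x hx => exact h x hx
  | zero => simp
  | add x y _ _ hx hy => simp [inner_add_left, hx, hy]
  | smul a x _ hx => simp [inner_smul_left, hx]

lemma span_t_eq [FiniteDimensional ℝ E] {ι κ : Type*} [Fintype ι] [Fintype κ]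
    {g : ι → E} {t : κ → E} (hg : LinearIndependent ℝ g) (ht : Orthonormal ℝ t)
    (hcard : Fintype.card ι + Fintype.card κ = finrank ℝ E)
    (hperp : ∀ j k, ⟪g j, t k⟫ = 0) :
    Submodule.span ℝ (Set.range t) = (Submodule.span ℝ (Set.range g))ᗮ := by
  have hle : Submodule.span ℝ (Set.range t) ≤ (Submodule.span ℝ (Set.range g))ᗮ := by
    rw [Submodule.span_le]
    rintro _ ⟨k, rfl⟩
    exact mem_orth_of_forall (by rintro _ ⟨j, rfl⟩; exact hperp j k)
  have h1 : finrank ℝ (Submodule.span ℝ (Set.range t)) = Fintype.card κ :=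
    finrank_span_eq_card ht.linearIndependent
  have h2 : finrank ℝ (Submodule.span ℝ (Set.range g))ᗮ = Fintype.card κ := by
    apply Submodule.finrank_add_finrank_orthogonal'
    rw [finrank_span_eq_card hg, hcard]
  exact Submodule.eq_of_le_of_finrank_le hle (by rw [h1, h2])

lemma expansion_of_perp [FiniteDimensional ℝ E] {ι κ : Type*} [Fintype ι] [Fintype κ] [DecidableEq κ]
    {g : ι → E} {t : κ → E} (hg : LinearIndependent ℝ g) (ht : Orthonormal ℝ t)
    (hcard : Fintype.card ι + Fintype.card κ = finrank ℝ E)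
    (hperp : ∀ j k, ⟪g j, t k⟫ = 0) {v : E} (hv : ∀ j, ⟪g j, v⟫ = 0) :
    v = ∑ k, ⟪v, t k⟫ • t k := by
  have hvS : v ∈ Submodule.span ℝ (Set.range t) := by
    rw [span_t_eq hg ht hcard hperp]
    exact mem_orth_of_forall (by rintro _ ⟨j, rfl⟩; exact hv j)
  set w := v - ∑ k, ⟪v, t k⟫ • t k with hw
  have hwS : w ∈ Submodule.span ℝ (Set.range t) :=
    Submodule.sub_mem _ hvS (Submodule.sum_mem _ fun k _ =>
      Submodule.smul_mem _ _ (Submodule.subset_span ⟨k, rfl⟩))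
  have hwO : w ∈ (Submodule.span ℝ (Set.range t))ᗮ := by
    apply mem_orth_of_forall
    rintro _ ⟨l, rfl⟩
    have : ∀ k, ⟪t l, ⟪v, t k⟫ • t k⟫ = if l = k then ⟪v, t l⟫ else 0 := by
      intro k
      rw [real_inner_smul_right]
      rcases eq_or_ne l k with rfl | hlk
      · simp [orthonormal_iff_ite.mp ht l l, ht.1 l]
      · simp [orthonormal_iff_ite.mp ht l k, hlk]
    simp only [hw, inner_sub_right, inner_sum, this, Finset.sum_ite_eq, Finset.mem_univ,
      if_true]
    rw [real_inner_comm]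
    ring
  have hw0 : w = 0 := by
    have h0 : ⟪w, w⟫ = 0 := (Submodule.mem_orthogonal _ _).mp hwO w hwS
    rwa [inner_self_eq_zero] at h0
  exact sub_eq_zero.mp hw0

end Helpers

/-- The implicit relation `y - y⁰ = T(y⁰,y)η`, where the columns of `T(y⁰,y)`
form a smooth orthonormal basis of the orthogonal complement of the span of the
discrete gradients `∇̄H_j(y⁰,y)`, defines a smooth local chart `ω` of the level
set manifold `M` around each `y⁰ ∈ M`: on a relatively open neighborhood
`N = U ∩ M` of `y⁰` the coordinate map `ω` is smooth, injective, satisfies the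
implicit relation, and has a smooth inverse `χ`. -/
theorem stmt_14 {m q : ℕ}
    (H : Fin q → EuclideanSpace ℝ (Fin m) → ℝ) (c : Fin q → ℝ)
    (M : Set (EuclideanSpace ℝ (Fin m)))
    (hM : M = {y | ∀ j, H j y = c j})
    (hH : ∀ j, ContDiff ℝ (⊤ : ℕ∞) (H j))
    (gradH : Fin q → EuclideanSpace ℝ (Fin m) → EuclideanSpace ℝ (Fin m))
    (hgrad : ∀ j y, HasFDerivAt (H j)
      (innerSL ℝ (gradH j y)) y)
    (hindep : ∀ y₀ ∈ M, LinearIndependent ℝ (fun j => gradH j y₀))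
    (dg : Fin q → EuclideanSpace ℝ (Fin m) → EuclideanSpace ℝ (Fin m) →
      EuclideanSpace ℝ (Fin m))
    (hdg : ∀ j a b, H j b - H j a = ⟪dg j a b, b - a⟫)
    (hdgsmooth : ∀ j y₀, ContDiff ℝ (⊤ : ℕ∞) (dg j y₀))
    (hdgcons : ∀ j y, dg j y y = gradH j y)
    -- the columns `T y₀ y k` of the frame `T(y₀,y)`
    (T : EuclideanSpace ℝ (Fin m) → EuclideanSpace ℝ (Fin m) →
      Fin (m - q) → EuclideanSpace ℝ (Fin m))
    (hTsmooth : ∀ y₀ k, ContDiff ℝ (⊤ : ℕ∞) (fun y => T y₀ y k))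
    (hTorth : ∀ y₀ y k l, ⟪T y₀ y k, T y₀ y l⟫ = if k = l then (1:ℝ) else 0)
    (hTperp : ∀ y₀ y j k, ⟪dg j y₀ y, T y₀ y k⟫ = 0) :
    ∀ y₀ ∈ M, ∃ U : Set (EuclideanSpace ℝ (Fin m)), IsOpen U ∧ y₀ ∈ U ∧
      ∃ ω : EuclideanSpace ℝ (Fin m) → (Fin (m - q) → ℝ),
        ContDiffOn ℝ (⊤ : ℕ∞) ω U ∧
        (∀ y ∈ U ∩ M, y - y₀ = ∑ k, ω y k • T y₀ y k) ∧
        Set.InjOn ω (U ∩ M) ∧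
        ∃ χ : (Fin (m - q) → ℝ) → EuclideanSpace ℝ (Fin m),
          ContDiffOn ℝ (⊤ : ℕ∞) χ (ω '' (U ∩ M)) ∧
          (∀ y ∈ U ∩ M, χ (ω y) = y) ∧
          (∀ η ∈ ω '' (U ∩ M), χ η ∈ M) := by
  classical
  intro y₀ hy₀
  have hfinE : finrank ℝ (EuclideanSpace ℝ (Fin m)) = m := finrank_euclideanSpace_fin
  have hqm : q ≤ m := by
    have h := LinearIndependent.fintype_card_le_finrank (hindep y₀ hy₀)
    simpa [hfinE] using h
  have hcard : Fintype.card (Fin q) + Fintype.card (Fin (m - q)) =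
      finrank ℝ (EuclideanSpace ℝ (Fin m)) := by
    simp only [Fintype.card_fin, hfinE]; omega
  -- the chart
  set ω : EuclideanSpace ℝ (Fin m) → (Fin (m - q) → ℝ) :=
    fun y k => ⟪y - y₀, T y₀ y k⟫ with hωdef
  set F : EuclideanSpace ℝ (Fin m) → (Fin (m - q) → ℝ) × (Fin q → ℝ) :=
    fun y => (ω y, fun j => H j y - c j) with hFdef
  have hω : ContDiff ℝ (⊤ : ℕ∞) ω := contDiff_pi.2 fun k =>
    ContDiff.inner ℝ (contDiff_id.sub contDiff_const) (hTsmooth y₀ k)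
  have hF : ContDiff ℝ (⊤ : ℕ∞) F :=
    hω.prodMk (contDiff_pi.2 fun j => (hH j).sub contDiff_const)
  -- the derivative of F at y₀
  set L : EuclideanSpace ℝ (Fin m) →L[ℝ] (Fin (m - q) → ℝ) × (Fin q → ℝ) :=
    (ContinuousLinearMap.pi fun k => innerSL ℝ (T y₀ y₀ k)).prod
      (ContinuousLinearMap.pi fun j => innerSL ℝ (gradH j y₀)) with hLdef
  have hF' : HasFDerivAt F L y₀ := by
    apply HasFDerivAt.prodMk
    · apply hasFDerivAt_pi.2
      intro k
      have hT' : HasFDerivAt (fun y => T y₀ y k)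
          (fderiv ℝ (fun y => T y₀ y k) y₀) y₀ :=
        (((hTsmooth y₀ k).differentiable (by simp)) y₀).hasFDerivAt
      have hsub : HasFDerivAt (fun y : EuclideanSpace ℝ (Fin m) => y - y₀)
          (ContinuousLinearMap.id ℝ (EuclideanSpace ℝ (Fin m))) y₀ :=
        (hasFDerivAt_id y₀).sub_const y₀
      have h := hsub.inner ℝ hT'
      convert h using 1
      · rfl
      ext v
      simp only [ContinuousLinearMap.coe_comp', Function.comp_apply,
        ContinuousLinearMap.prod_apply, ContinuousLinearMap.coe_id', id_eq,
        fderivInnerCLM_apply, sub_self, inner_zero_left, add_zero, innerSL_apply_apply]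
      rw [zero_add]
      exact real_inner_comm v (T y₀ y₀ k)
    · apply hasFDerivAt_pi.2
      intro j
      exact (hgrad j y₀).sub_const (c j)
  -- L is invertible
  have hLinj : Function.Injective L := by
    intro v w hvw
    have hz : L (v - w) = 0 := by rw [map_sub, hvw, sub_self]
    have h1 : ∀ k, ⟪T y₀ y₀ k, v - w⟫ = 0 := by
      intro k
      have h := congrFun (congrArg Prod.fst hz) k
      simpa [hLdef] using h
    have h2 : ∀ j, ⟪gradH j y₀, v - w⟫ = 0 := by
      intro j
      have h := congrFun (congrArg Prod.snd hz) j
      simpa [hLdef] using h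
    have hexp := expansion_of_perp (hindep y₀ hy₀)
      (orthonormal_iff_ite.2 (hTorth y₀ y₀)) hcard
      (fun j k => by rw [← hdgcons j y₀]; exact hTperp y₀ y₀ j k) h2
    have : v - w = 0 := by
      rw [hexp]
      apply Finset.sum_eq_zero
      intro k _
      have h1' : ⟪v - w, T y₀ y₀ k⟫ = 0 := by rw [real_inner_comm]; exact h1 k
      rw [h1', zero_smul]
    exact sub_eq_zero.mp this
  have hfr : finrank ℝ (EuclideanSpace ℝ (Fin m)) =
      finrank ℝ ((Fin (m - q) → ℝ) × (Fin q → ℝ)) := by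
    rw [hfinE, Module.finrank_prod, Module.finrank_fintype_fun_eq_card,
      Module.finrank_fintype_fun_eq_card]
    simp only [Fintype.card_fin]
    omega
  have hLbij : Function.Bijective L :=
    ⟨hLinj, (LinearMap.injective_iff_surjective_of_finrank_eq_finrank hfr).1 hLinj⟩
  set e : EuclideanSpace ℝ (Fin m) ≃L[ℝ] (Fin (m - q) → ℝ) × (Fin q → ℝ) :=
    (LinearEquiv.ofBijective L.toLinearMap hLbij).toContinuousLinearEquiv with hedef
  have hecoe : (e : EuclideanSpace ℝ (Fin m) →L[ℝ] (Fin (m - q) → ℝ) × (Fin q → ℝ)) = L :=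
    ContinuousLinearMap.ext fun v => congrFun (LinearEquiv.coe_toContinuousLinearEquiv' _) v
  have hF'e : HasFDerivAt F
      (e : EuclideanSpace ℝ (Fin m) →L[ℝ] (Fin (m - q) → ℝ) × (Fin q → ℝ)) y₀ := by
    rw [hecoe]; exact hF'
  -- the partial homeomorphism
  set Φ := hF.contDiffAt.toOpenPartialHomeomorph F hF'e (by simp) with hΦdef
  have hΦcoe : ⇑Φ = F := rfl
  -- open sets
  set U₁ : Set (EuclideanSpace ℝ (Fin m)) :=
    (fun y => fun j => dg j y₀ y) ⁻¹' {f | LinearIndependent ℝ f} with hU₁def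
  have hU₁open : IsOpen U₁ :=
    isOpen_setOf_linearIndependent.preimage
      (continuous_pi fun j => (hdgsmooth j y₀).continuous)
  have hy₀U₁ : y₀ ∈ U₁ := by
    simp only [hU₁def, Set.mem_preimage, Set.mem_setOf_eq]
    have : (fun j => dg j y₀ y₀) = fun j => gradH j y₀ := funext fun j => hdgcons j y₀
    rw [this]
    exact hindep y₀ hy₀
  set U₂ : Set (EuclideanSpace ℝ (Fin m)) :=
    (fderiv ℝ F) ⁻¹' {A | Function.Injective A} with hU₂def
  have hU₂open : IsOpen U₂ :=
    ContinuousLinearMap.isOpen_injective.preimage (hF.continuous_fderiv (by simp))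
  have hy₀U₂ : y₀ ∈ U₂ := by
    simp only [hU₂def, Set.mem_preimage, Set.mem_setOf_eq, hF'.fderiv]
    exact hLinj
  set U : Set (EuclideanSpace ℝ (Fin m)) := U₁ ∩ U₂ ∩ Φ.source with hUdef
  have hUopen : IsOpen U := (hU₁open.inter hU₂open).inter Φ.open_source
  have hy₀U : y₀ ∈ U :=
    ⟨⟨hy₀U₁, hy₀U₂⟩, hF.contDiffAt.mem_toOpenPartialHomeomorph_source hF'e (by simp)⟩
  refine ⟨U, hUopen, hy₀U, ω, hω.contDiffOn, ?_, ?_, ?_⟩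
  · -- implicit relation
    rintro y ⟨hyU, hyM⟩
    have hdgind : LinearIndependent ℝ (fun j => dg j y₀ y) := hyU.1.1
    have hinner : ∀ j, ⟪dg j y₀ y, y - y₀⟫ = 0 := by
      intro j
      rw [← hdg j y₀ y]
      rw [hM] at hy₀ hyM
      rw [hyM j, hy₀ j, sub_self]
    exact expansion_of_perp hdgind (orthonormal_iff_ite.2 (hTorth y₀ y)) hcard
      (fun j k => hTperp y₀ y j k) hinner
  · -- injectivity
    rintro y ⟨hyU, hyM⟩ y' ⟨hy'U, hy'M⟩ hωeq
    have hFy : F y = F y' := by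
      rw [hM] at hyM hy'M
      simp only [hFdef]
      refine Prod.ext hωeq (funext fun j => ?_)
      show H j y - c j = H j y' - c j
      rw [hyM j, hy'M j]
    exact Φ.injOn hyU.2 hy'U.2 hFy
  · -- the inverse χ
    refine ⟨fun η => Φ.symm (η, 0), ?_, ?_, ?_⟩
    · rintro _ ⟨y, ⟨hyU, hyM⟩, rfl⟩
      apply ContDiffWithinAt.mono _ (Set.subset_univ _)
      rw [contDiffWithinAt_univ]
      have hFy : F y = (ω y, 0) := by
        rw [hM] at hyM
        simp only [hFdef]
        refine Prod.ext rfl (funext fun j => ?_)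
        show H j y - c j = (0 : Fin q → ℝ) j
        rw [hyM j]
        simp
      have hmem : (ω y, (0 : Fin q → ℝ)) ∈ Φ.target := by
        rw [← hFy]; exact Φ.map_source hyU.2
      have hsymmFy : Φ.symm (ω y, (0 : Fin q → ℝ)) = y := by
        rw [← hFy]; exact Φ.left_inv hyU.2
      have hinjy : Function.Injective (fderiv ℝ F y) := hyU.1.2
      set ey : EuclideanSpace ℝ (Fin m) ≃L[ℝ] (Fin (m - q) → ℝ) × (Fin q → ℝ) :=
        (LinearEquiv.ofBijective (fderiv ℝ F y).toLinearMap
          ⟨hinjy, (LinearMap.injective_iff_surjective_of_finrank_eq_finrank hfr).1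
            hinjy⟩).toContinuousLinearEquiv with heydef
      have heycoe : (ey : EuclideanSpace ℝ (Fin m) →L[ℝ]
          (Fin (m - q) → ℝ) × (Fin q → ℝ)) = fderiv ℝ F y :=
        ContinuousLinearMap.ext fun v => congrFun (LinearEquiv.coe_toContinuousLinearEquiv' _) v
      have hderiv : HasFDerivAt F (ey : EuclideanSpace ℝ (Fin m) →L[ℝ]
          (Fin (m - q) → ℝ) × (Fin q → ℝ)) (Φ.symm (ω y, 0)) := by
        rw [hsymmFy, heycoe]
        exact ((hF.differentiable (by simp)) y).hasFDerivAt
      have hsymm : ContDiffAt ℝ (⊤ : ℕ∞) Φ.symm (ω y, (0 : Fin q → ℝ)) := by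
        apply Φ.contDiffAt_symm hmem hderiv
        rw [hΦcoe, hsymmFy]
        exact hF.contDiffAt
      exact hsymm.comp (ω y) ((contDiff_id.prodMk contDiff_const).contDiffAt)
    · rintro y ⟨hyU, hyM⟩
      have hFy : F y = (ω y, 0) := by
        rw [hM] at hyM
        simp only [hFdef]
        refine Prod.ext rfl (funext fun j => ?_)
        show H j y - c j = (0 : Fin q → ℝ) j
        rw [hyM j]
        simp
      show Φ.symm (ω y, 0) = y
      rw [← hFy]
      exact Φ.left_inv hyU.2
    · rintro _ ⟨y, ⟨hyU, hyM⟩, rfl⟩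
      have hFy : F y = (ω y, 0) := by
        rw [hM] at hyM
        simp only [hFdef]
        refine Prod.ext rfl (funext fun j => ?_)
        show H j y - c j = (0 : Fin q → ℝ) j
        rw [hyM j]
        simp
      have hs : Φ.symm (ω y, (0 : Fin q → ℝ)) = y := by
        rw [← hFy]; exact Φ.left_inv hyU.2
      show Φ.symm (ω y, 0) ∈ M
      rw [hs]
      exact hyM
end
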